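/- arXiv:2508.01557 — 5 statements merged into one kernel-verified Lean document; each statement's English description precedes it below -/
import Mathlib

section
/- Let V be a finite type, E ⊆ V × V an edge relation, and w : V × V → ℝ a weight function, and suppose the graph contains no negative-cost cycle. Then for any vertices s and t such that there exists at least one walk from s to t, there exists an elementary path P from s to t (a walk whose vertices are pairwise distinct) such that the cost of P is less than or equal to the cost of every walk from s to t. -/
/-!
A walk that revisits a vertex contains a closed subwalk; cutting it out keeps the endpoints and,
since no cycle is negative, does not increase the cost. Iterating, every walk can be replaced by an
elementary one of at most the same cost. Elementary walks have fewer than `|V|` edges, so their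
costs form a finite set, and an elementary walk of least cost is a shortest walk.
-/

open Finset

section Walks

variable {V : Type*}

/-- `v 0, …, v k` is a walk of length `k`; values of `v` beyond `k` are irrelevant. -/
def IsWalk (E : V → V → Prop) (v : ℕ → V) (k : ℕ) : Prop :=
  ∀ i < k, E (v i) (v (i + 1))

def walkCost (w : V × V → ℝ) (v : ℕ → V) (k : ℕ) : ℝ :=
  ∑ i ∈ range k, w (v i, v (i + 1))

def IsElementary (v : ℕ → V) (k : ℕ) : Prop :=
  ∀ i ≤ k, ∀ j ≤ k, i ≠ j → v i ≠ v j

def NoNegativeCycle (E : V → V → Prop) (w : V × V → ℝ) : Prop :=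
  ∀ (k : ℕ) (v : ℕ → V), 1 ≤ k → v k = v 0 → IsWalk E v k → 0 ≤ walkCost w v k

variable {E : V → V → Prop} {w : V × V → ℝ}

theorem isWalk_add {v : ℕ → V} {a b : ℕ} :
    IsWalk E v (a + b) ↔ IsWalk E v a ∧ IsWalk E (fun m => v (a + m)) b := by
  refine ⟨fun h => ⟨fun i hi => h i (by omega), fun i hi => h (a + i) (by omega)⟩, ?_⟩
  rintro ⟨ha, hb⟩ i hi
  by_cases hia : i < a
  · exact ha i hia
  · obtain ⟨c, rfl⟩ := Nat.exists_eq_add_of_le (not_lt.1 hia)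
    exact hb c (by omega)

theorem walkCost_add (w : V × V → ℝ) (v : ℕ → V) (a b : ℕ) :
    walkCost w v (a + b) = walkCost w v a + walkCost w (fun m => v (a + m)) b := by
  simp only [walkCost, sum_range_add, add_assoc]

theorem isWalk_congr {v v' : ℕ → V} {k : ℕ} (h : ∀ m ≤ k, v m = v' m) :
    IsWalk E v k ↔ IsWalk E v' k :=
  forall₂_congr fun i hi => by rw [h i hi.le, h (i + 1) hi]

theorem walkCost_congr {v v' : ℕ → V} {k : ℕ} (h : ∀ m ≤ k, v m = v' m) :
    walkCost w v k = walkCost w v' k :=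
  sum_congr rfl fun i hi => by
    rw [mem_range] at hi
    rw [h i hi.le, h (i + 1) hi]

theorem IsElementary.length_lt_card [Finite V] {v : ℕ → V} {k : ℕ} (h : IsElementary v k) :
    k < Nat.card V := by
  have hinj : Function.Injective fun i : Fin (k + 1) => v i := fun i j hij =>
    Fin.ext (not_imp_not.1 (h i (by omega) j (by omega)) hij)
  have := Nat.card_le_card_of_injective _ hinj
  rw [Nat.card_fin] at this
  omega

theorem finite_walkCost_of_length_lt [Finite V] (w : V × V → ℝ) (n : ℕ) :
    {c | ∃ k < n, ∃ v : ℕ → V, walkCost w v k = c}.Finite := by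
  refine ((Set.finite_Iio n).biUnion fun k _ =>
    Set.finite_range fun g : Fin (k + 1) → V => ∑ i : Fin k, w (g i.castSucc, g i.succ)).subset ?_
  rintro _ ⟨k, hk, v, rfl⟩
  refine Set.mem_biUnion hk ⟨fun i => v i, ?_⟩
  simp only [Fin.val_castSucc, Fin.val_succ, walkCost]
  exact Fin.sum_univ_eq_sum_range (fun i => w (v i, v (i + 1))) k

/-- The walk `v` with its closed subwalk from position `i` to position `i + d` removed. -/
def cutCycle (v : ℕ → V) (i d : ℕ) : ℕ → V :=
  fun m => if m < i then v m else v (m + d)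

theorem cutCycle_of_le {v : ℕ → V} {i d : ℕ} (hcyc : v i = v (i + d)) {m : ℕ} (hm : m ≤ i) :
    cutCycle v i d m = v m := by
  rcases hm.lt_or_eq with hm | rfl
  · simp [cutCycle, hm]
  · simp [cutCycle, hcyc]

theorem cutCycle_add (v : ℕ → V) (i d m : ℕ) :
    cutCycle v i d (i + m) = v (i + d + m) := by
  simp [cutCycle, Nat.add_right_comm]

theorem isWalk_cutCycle {v : ℕ → V} {i d r : ℕ} (hcyc : v i = v (i + d))
    (hv : IsWalk E v (i + d + r)) : IsWalk E (cutCycle v i d) (i + r) := by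
  obtain ⟨hid, hr⟩ := isWalk_add.1 hv
  refine isWalk_add.2 ⟨(isWalk_congr fun m hm => cutCycle_of_le hcyc hm).2 (isWalk_add.1 hid).1, ?_⟩
  simpa only [cutCycle_add] using hr

theorem walkCost_cutCycle (w : V × V → ℝ) {v : ℕ → V} {i d : ℕ} (hcyc : v i = v (i + d))
    (r : ℕ) : walkCost w (cutCycle v i d) (i + r) + walkCost w (fun m => v (i + m)) d =
      walkCost w v (i + d + r) := by
  rw [walkCost_add, walkCost_add w v, walkCost_add w v,
    walkCost_congr fun m hm => cutCycle_of_le hcyc hm]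
  simp only [cutCycle_add]
  ring

theorem exists_shorter_walk_of_not_isElementary (hneg : NoNegativeCycle E w) {v : ℕ → V}
    {k : ℕ} (hv : IsWalk E v k) (hel : ¬ IsElementary v k) :
    ∃ k' < k, ∃ v' : ℕ → V, v' 0 = v 0 ∧ v' k' = v k ∧ IsWalk E v' k' ∧
      walkCost w v' k' ≤ walkCost w v k := by
  obtain ⟨i, j, hij, hjk, hvij⟩ : ∃ i j, i < j ∧ j ≤ k ∧ v i = v j := by
    simp only [IsElementary, not_forall, not_not] at hel
    obtain ⟨a, ha, b, hb, hab, hvab⟩ := hel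
    rcases Nat.lt_or_gt_of_ne hab with h | h
    exacts [⟨a, b, h, hb, hvab⟩, ⟨b, a, h, ha, hvab.symm⟩]
  obtain ⟨d, hd, rfl⟩ : ∃ d, 1 ≤ d ∧ j = i + d := ⟨j - i, by omega, by omega⟩
  obtain ⟨r, rfl⟩ := Nat.exists_eq_add_of_le hjk
  have hcycle_nonneg : 0 ≤ walkCost w (fun m => v (i + m)) d :=
    hneg _ _ hd hvij.symm (isWalk_add.1 (isWalk_add.1 hv).1).2
  refine ⟨i + r, by omega, cutCycle v i d, cutCycle_of_le hvij (Nat.zero_le i),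
    cutCycle_add v i d r, isWalk_cutCycle hvij hv, ?_⟩
  linarith [walkCost_cutCycle w hvij r]

theorem exists_isElementary_walkCost_le (hneg : NoNegativeCycle E w) {v : ℕ → V} {k : ℕ}
    (hv : IsWalk E v k) :
    ∃ (k' : ℕ) (v' : ℕ → V), v' 0 = v 0 ∧ v' k' = v k ∧ IsWalk E v' k' ∧ IsElementary v' k' ∧
      walkCost w v' k' ≤ walkCost w v k := by
  induction k using Nat.strong_induction_on generalizing v with
  | _ k ih =>
    by_cases hel : IsElementary v k
    · exact ⟨k, v, rfl, rfl, hv, hel, le_rfl⟩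
    obtain ⟨k₁, hk₁, v₁, h0, hk, hv₁, hcost⟩ := exists_shorter_walk_of_not_isElementary hneg hv hel
    obtain ⟨k', v', h0', hk', hv', hel', hcost'⟩ := ih k₁ hk₁ hv₁
    exact ⟨k', v', h0'.trans h0, hk'.trans hk, hv', hel', hcost'.trans hcost⟩

end Walks

/-- In a weighted directed graph with no negative-cost cycle, for every pair of
vertices `s, t` connected by at least one walk there is an elementary path
(a walk with pairwise-distinct vertices) from `s` to `t` whose cost is at most
the cost of every walk from `s` to `t`. -/
theorem exists_elementary_shortest_path
    (V : Type*) [Fintype V] (E : V → V → Prop) (w : V × V → ℝ)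
    (hnoneg : ∀ (k : ℕ) (v : ℕ → V), 1 ≤ k → v k = v 0 →
      (∀ i < k, E (v i) (v (i + 1))) →
      0 ≤ ∑ i ∈ Finset.range k, w (v i, v (i + 1)))
    (s t : V)
    (hconn : ∃ (k : ℕ) (v : ℕ → V), v 0 = s ∧ v k = t ∧
      ∀ i < k, E (v i) (v (i + 1))) :
    ∃ (k : ℕ) (v : ℕ → V), v 0 = s ∧ v k = t ∧
      (∀ i < k, E (v i) (v (i + 1))) ∧
      (∀ i ≤ k, ∀ j ≤ k, i ≠ j → v i ≠ v j) ∧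
      (∀ (m : ℕ) (u : ℕ → V), u 0 = s → u m = t →
        (∀ i < m, E (u i) (u (i + 1))) →
        ∑ i ∈ Finset.range k, w (v i, v (i + 1)) ≤
          ∑ i ∈ Finset.range m, w (u i, u (i + 1))) := by
  set C := {c | ∃ (k : ℕ) (v : ℕ → V), v 0 = s ∧ v k = t ∧ IsWalk E v k ∧ IsElementary v k ∧
    walkCost w v k = c}
  have hC : C.Finite := (finite_walkCost_of_length_lt w (Nat.card V)).subset
    fun _ ⟨k, v, _, _, _, hel, hc⟩ => ⟨k, hel.length_lt_card, v, hc⟩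
  have hC' : C.Nonempty := by
    obtain ⟨k₀, v₀, rfl, rfl, hv₀⟩ := hconn
    obtain ⟨k, v, hs, ht, hv, hel, -⟩ := exists_isElementary_walkCost_le hnoneg hv₀
    exact ⟨_, k, v, hs, ht, hv, hel, rfl⟩
  obtain ⟨_, ⟨k, v, hs, ht, hv, hel, rfl⟩, hmin⟩ := Set.exists_min_image C id hC hC'
  refine ⟨k, v, hs, ht, hv, hel, fun m u hu0 hum hu => ?_⟩
  obtain ⟨k', u', h0, hk', hu', hel', hcost⟩ := exists_isElementary_walkCost_le hnoneg hu
  exact (hmin _ ⟨k', u', h0.trans hu0, hk'.trans hum, hu', hel', rfl⟩).trans hcost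
end

section
/- Let V be a finite type, E ⊆ V × V an edge relation, and w : V × V → ℝ a weight function. If W is a walk from s to t that visits some vertex more than once, then there exist a walk W′ from s to t with strictly fewer edges than W and a cycle C in the graph such that cost(W) = cost(W′) + cost(C). -/
/-- If a walk `W` from `s` to `t` visits some vertex more than once, then there
are a strictly shorter walk `W'` from `s` to `t` and a cycle `C` of the graph
with `cost W = cost W' + cost C`. -/
theorem walk_with_repeat_splits_off_cycle
    (V : Type*) [Fintype V] (E : V → V → Prop) (w : V × V → ℝ)
    (s t : V) (k : ℕ) (v : ℕ → V)
    (hv0 : v 0 = s) (hvk : v k = t)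
    (hE : ∀ i < k, E (v i) (v (i + 1)))
    (hrep : ∃ i j, i < j ∧ j ≤ k ∧ v i = v j) :
    ∃ (m : ℕ) (u : ℕ → V), m < k ∧ u 0 = s ∧ u m = t ∧
      (∀ i < m, E (u i) (u (i + 1))) ∧
      ∃ (l : ℕ) (c : ℕ → V), 1 ≤ l ∧ c l = c 0 ∧
        (∀ i < l, E (c i) (c (i + 1))) ∧
        ∑ i ∈ Finset.range k, w (v i, v (i + 1)) =
          ∑ i ∈ Finset.range m, w (u i, u (i + 1)) +
            ∑ i ∈ Finset.range l, w (c i, c (i + 1)) := by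
  obtain ⟨i, j, hij, hjk, hv⟩ := hrep
  set d := j - i with hd
  have hid : i + d = j := by omega
  set u : ℕ → V := fun n => if n ≤ i then v n else v (n + d) with hu
  have hub : ∀ n, i ≤ n → u n = v (n + d) := by
    intro n hn
    rw [hu]
    simp only
    split_ifs with h
    · have hni : n = i := le_antisymm h hn
      subst hni
      rw [hid, hv]
    · rfl
  have hus : ∀ n, n ≤ i → u n = v n := by
    intro n hn
    rw [hu]; simp [hn]
  refine ⟨i + (k - j), u, by omega, ?_, ?_, ?_, d, fun n => v (i + n), by omega, ?_, ?_, ?_⟩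
  · rw [hus 0 (Nat.zero_le _), hv0]
  · rw [hub _ (by omega)]
    have : i + (k - j) + d = k := by omega
    rw [this, hvk]
  · intro n hn
    rcases lt_or_ge n i with h | h
    · rw [hus n (by omega), hus (n+1) (by omega)]
      exact hE n (by omega)
    · rw [hub n h, hub (n+1) (by omega)]
      have h1 : n + 1 + d = n + d + 1 := by omega
      rw [h1]
      exact hE (n + d) (by omega)
  · simp only [hid, add_zero, hv]
  · intro n hn
    show E (v (i + n)) (v (i + (n + 1)))
    have h1 : i + (n + 1) = i + n + 1 := by omega
    rw [h1]
    exact hE (i + n) (by omega)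
  · have hk : k = i + (d + (k - j)) := by omega
    beta_reduce
    conv_lhs => rw [hk, Finset.sum_range_add, Finset.sum_range_add]
    rw [Finset.sum_range_add]
    have e1 : ∀ n ∈ Finset.range i, w (u n, u (n+1)) = w (v n, v (n+1)) := by
      intro n hn
      rw [Finset.mem_range] at hn
      rw [hus n (by omega), hus (n+1) (by omega)]
    have e2 : ∀ n ∈ Finset.range (k - j),
        w (u (i + n), u (i + n + 1)) = w (v (i + (d + n)), v (i + (d + n) + 1)) := by
      intro n hn
      rw [hub (i+n) (by omega), hub (i+n+1) (by omega)]
      have h1 : i + n + d = i + (d + n) := by omega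
      have h2 : i + n + 1 + d = i + (d + n) + 1 := by omega
      rw [h1, h2]
    rw [Finset.sum_congr rfl e1, Finset.sum_congr rfl e2]
    have h3 : ∀ n ∈ Finset.range d, w (v (i + n), v (i + n + 1)) = w (v (i + n), v (i + (n + 1))) := by
      intro n _
      have : i + n + 1 = i + (n + 1) := by omega
      rw [this]
    rw [Finset.sum_congr rfl h3]
    ring
end

section
/- Let V be a finite type, E ⊆ V × V an edge relation, w : V × V → ℝ a weight function, and t ∈ V a fixed sink. Define the Bellman–Ford iterates d_k : V → ℝ ∪ {+∞} by d_0(t) = 0, d_0(u) = +∞ for u ≠ t, and d_{k+1}(u) = min(d_k(u), min_{(u,v) ∈ E} (w(u,v) + d_k(v))). Then for every k ≥ 0 and every vertex u, d_k(u) equals the infimum of the costs of walks from u to t that use at most k edges (equal to +∞ if no such walk exists). -/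
open scoped Classical

/-- Bellman–Ford iterates toward a sink `t`, valued in the extended reals:
`d 0 t = 0`, `d 0 u = +∞` for `u ≠ t`, and
`d (k+1) u = min (d k u) (min over edges (u,v) of w(u,v) + d k v)`. -/
noncomputable def bellmanFord (V : Type*) (E : V → V → Prop)
    (w : V × V → ℝ) (t : V) : ℕ → V → EReal
  | 0, u => if u = t then 0 else ⊤
  | (k + 1), u =>
      min (bellmanFord V E w t k u)
        (⨅ (v : V) (_ : E u v), ((w (u, v) : EReal) + bellmanFord V E w t k v))

/-!
Splitting a walk with at most `k + 1` edges at its first edge shows that the infimum of walk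
costs satisfies the Bellman–Ford recursion; since it also has the same initial values, the
two agree by induction on `k`. Pulling the weight of the first edge out of the infimum uses
that translation by a real number is an order automorphism of `EReal`.
-/

open Set

namespace EReal

noncomputable def addCoeOrderIso (c : ℝ) : EReal ≃o EReal where
  toFun x := c + x
  invFun x := ((-c : ℝ) : EReal) + x
  left_inv x := by simp only [← add_assoc, ← coe_add, neg_add_cancel, coe_zero, zero_add]
  right_inv x := by simp only [← add_assoc, ← coe_add, add_neg_cancel, coe_zero, zero_add]
  map_rel_iff' {x y} := by
    change (c : EReal) + x ≤ c + y ↔ x ≤ y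
    refine ⟨fun h => ?_, fun h => add_le_add_right h _⟩
    simpa only [← add_assoc, ← coe_add, neg_add_cancel, coe_zero, zero_add]
      using add_le_add_right h ((-c : ℝ) : EReal)

theorem coe_add_sInf (c : ℝ) (s : Set EReal) :
    (c : EReal) + sInf s = ⨅ x ∈ s, (c : EReal) + x :=
  (addCoeOrderIso c).map_sInf s

end EReal

section WalkCosts

variable {V : Type*} (E : V → V → Prop) (w : V × V → ℝ) (t : V)

def walkCosts (k : ℕ) (u : V) : Set EReal :=
  {x : EReal | ∃ (m : ℕ) (v : ℕ → V), m ≤ k ∧ v 0 = u ∧ v m = t ∧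
    (∀ i < m, E (v i) (v (i + 1))) ∧
    x = ((∑ i ∈ Finset.range m, w (v i, v (i + 1)) : ℝ) : EReal)}

variable {E w t}

theorem walkCosts_mono {k l : ℕ} (hkl : k ≤ l) (u : V) :
    walkCosts E w t k u ⊆ walkCosts E w t l u := by
  rintro x ⟨m, v, hm, hv⟩
  exact ⟨m, v, hm.trans hkl, hv⟩

theorem walkCosts_zero (u : V) :
    walkCosts E w t 0 u = if u = t then {0} else ∅ := by
  ext x
  simp only [walkCosts, Nat.le_zero, exists_and_left, exists_eq_left, Finset.range_zero,
    Finset.sum_empty, EReal.coe_zero, not_lt_zero, IsEmpty.forall_iff, implies_true, true_and]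
  split_ifs with hu
  · subst hu
    exact ⟨fun ⟨_, _, _, hx⟩ => hx, fun hx => ⟨fun _ => u, rfl, rfl, hx⟩⟩
  · exact ⟨fun ⟨_, h0, ht, _⟩ => hu (h0 ▸ ht), fun h => h.elim⟩

theorem coe_add_mem_walkCosts_succ {k : ℕ} {u v : V} (huv : E u v) {x : EReal}
    (hx : x ∈ walkCosts E w t k v) : (w (u, v) : EReal) + x ∈ walkCosts E w t (k + 1) u := by
  obtain ⟨m, p, hm, hp0, hpm, hp, rfl⟩ := hx
  let q : ℕ → V
    | 0 => u
    | j + 1 => p j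
  refine ⟨m + 1, q, by omega, rfl, hpm, ?_, ?_⟩
  · rintro (_ | j) hj
    · change E u (p 0)
      rwa [hp0]
    · exact hp j (by omega)
  · rw [Finset.sum_range_succ', ← EReal.coe_add, add_comm]
    simp only [q, hp0]

theorem walkCosts_succ (k : ℕ) (u : V) :
    walkCosts E w t (k + 1) u = walkCosts E w t k u ∪
      ⋃ (v : V) (_ : E u v), ((w (u, v) : EReal) + ·) '' walkCosts E w t k v := by
  refine Subset.antisymm ?_ (union_subset (walkCosts_mono k.le_succ u) ?_)
  · rintro x ⟨m, v, hm, hv0, hvm, hv, rfl⟩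
    rcases Nat.lt_or_ge k m with hkm | hmk
    · obtain rfl : m = k + 1 := by omega
      have htail : ((∑ i ∈ Finset.range k, w (v (i + 1), v (i + 1 + 1)) : ℝ) : EReal) ∈
          walkCosts E w t k (v 1) :=
        ⟨k, fun i => v (i + 1), le_rfl, rfl, hvm, fun i hi => hv (i + 1) (by omega), rfl⟩
      refine Or.inr (mem_biUnion (x := v 1) (hv0 ▸ hv 0 k.succ_pos) ⟨_, htail, ?_⟩)
      rw [Finset.sum_range_succ' _ k, add_comm, EReal.coe_add, hv0]
    · exact Or.inl ⟨m, v, hmk, hv0, hvm, hv, rfl⟩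
  · simp only [iUnion_subset_iff, image_subset_iff]
    exact fun v huv x hx => coe_add_mem_walkCosts_succ huv hx

theorem sInf_walkCosts_zero (u : V) :
    sInf (walkCosts E w t 0 u) = if u = t then 0 else ⊤ := by
  rw [walkCosts_zero]
  split_ifs
  exacts [sInf_singleton, sInf_empty]

theorem sInf_walkCosts_succ (k : ℕ) (u : V) :
    sInf (walkCosts E w t (k + 1) u) = min (sInf (walkCosts E w t k u))
      (⨅ (v : V) (_ : E u v), (w (u, v) : EReal) + sInf (walkCosts E w t k v)) := by
  rw [walkCosts_succ, sInf_union, sInf_eq_iInf (s := ⋃ _, _)]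
  congr 1
  simp only [iInf_iUnion, iInf_image, EReal.coe_add_sInf]

end WalkCosts

theorem bellmanFord_eq_sInf_walk_costs_general
    (V : Type*) (E : V → V → Prop) (w : V × V → ℝ) (t : V) :
    ∀ (k : ℕ) (u : V),
      bellmanFord V E w t k u =
        sInf {x : EReal | ∃ (m : ℕ) (v : ℕ → V), m ≤ k ∧ v 0 = u ∧ v m = t ∧
          (∀ i < m, E (v i) (v (i + 1))) ∧
          x = ((∑ i ∈ Finset.range m, w (v i, v (i + 1)) : ℝ) : EReal)} := by
  intro k
  induction k with
  | zero => exact fun u => (sInf_walkCosts_zero u).symm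
  | succ k ih =>
    intro u
    simp only [bellmanFord, ih]
    exact (sInf_walkCosts_succ k u).symm

/-- The `k`-th Bellman–Ford iterate at `u` equals the infimum of the costs of
walks from `u` to `t` that use at most `k` edges (`+∞` if no such walk exists). -/
theorem bellmanFord_eq_sInf_walk_costs
    (V : Type*) [Fintype V] (E : V → V → Prop) (w : V × V → ℝ) (t : V) :
    ∀ (k : ℕ) (u : V),
      bellmanFord V E w t k u =
        sInf {x : EReal | ∃ (m : ℕ) (v : ℕ → V), m ≤ k ∧ v 0 = u ∧ v m = t ∧
          (∀ i < m, E (v i) (v (i + 1))) ∧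
          x = ((∑ i ∈ Finset.range m, w (v i, v (i + 1)) : ℝ) : EReal)} :=
  bellmanFord_eq_sInf_walk_costs_general V E w t
end

section
/- Let (Ω', 𝒜, P) be a probability space, S a random element, f a nonnegative measurable function, Ω a measurable event (the feasible set), β > 0, and t ∈ (0,1). Define ℓ = E[f(S)] + β·P(S ∉ Ω) and suppose ℓ > 0. Then P(S ∈ Ω and f(S) ≤ ℓ/(1−t)) ≥ t − ℓ/β. -/
open MeasureTheory

/-- Probabilistic-method guarantee: if `ℓ = E[f(S)] + β·P(S ∉ Ω)` and `ℓ > 0`,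
then `P(S ∈ Ω and f(S) ≤ ℓ/(1-t)) ≥ t - ℓ/β`. -/
theorem probabilistic_method_certificate
    (Ω' : Type*) [MeasurableSpace Ω'] (P : Measure Ω') [IsProbabilityMeasure P]
    (α : Type*) [MeasurableSpace α]
    (S : Ω' → α) (hS : Measurable S)
    (f : α → ℝ) (hf : Measurable f) (hf0 : ∀ a, 0 ≤ f a)
    (hint : Integrable (fun ω => f (S ω)) P)
    (Ω : Set α) (hΩ : MeasurableSet Ω)
    (β : ℝ) (hβ : 0 < β) (t : ℝ) (ht : t ∈ Set.Ioo (0 : ℝ) 1)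
    (ℓ : ℝ)
    (hℓdef : ℓ = (∫ ω, f (S ω) ∂P) + β * (P {ω | S ω ∉ Ω}).toReal)
    (hℓpos : 0 < ℓ) :
    (P {ω | S ω ∈ Ω ∧ f (S ω) ≤ ℓ / (1 - t)}).toReal ≥ t - ℓ / β := by
  obtain ⟨ht0, ht1⟩ := ht
  set c := ℓ / (1 - t) with hc_def
  have h1t : (0:ℝ) < 1 - t := by linarith
  have hc : 0 < c := div_pos hℓpos h1t
  have hEf : 0 ≤ ∫ ω, f (S ω) ∂P := integral_nonneg fun ω => hf0 _
  have hPout0 : 0 ≤ (P {ω | S ω ∉ Ω}).toReal := ENNReal.toReal_nonneg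
  have hEf_le : ∫ ω, f (S ω) ∂P ≤ ℓ := by nlinarith
  have hPout_le : (P {ω | S ω ∉ Ω}).toReal ≤ ℓ / β := by
    rw [le_div_iff₀ hβ]; nlinarith
  have hMarkov : c * (P {ω | c ≤ f (S ω)}).toReal ≤ ∫ ω, f (S ω) ∂P :=
    mul_meas_ge_le_integral_of_nonneg (Filter.Eventually.of_forall fun ω => hf0 _) hint c
  have hPge : (P {ω | c ≤ f (S ω)}).toReal ≤ 1 - t := by
    have hle : (P {ω | c ≤ f (S ω)}).toReal ≤ ℓ / c := by
      rw [le_div_iff₀ hc]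
      calc (P {ω | c ≤ f (S ω)}).toReal * c = c * (P {ω | c ≤ f (S ω)}).toReal := by ring
        _ ≤ ∫ ω, f (S ω) ∂P := hMarkov
        _ ≤ ℓ := hEf_le
    have : ℓ / c = 1 - t := by
      rw [hc_def]
      field_simp
    linarith
  have hsub : {ω | S ω ∈ Ω ∧ f (S ω) ≤ c}ᶜ ⊆ {ω | S ω ∉ Ω} ∪ {ω | c ≤ f (S ω)} := by
    intro ω hω
    simp only [Set.mem_compl_iff, Set.mem_setOf_eq, not_and_or, not_le] at hω
    rcases hω with h | h
    · exact Or.inl h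
    · exact Or.inr (le_of_lt h)
  have hmeas : MeasurableSet {ω | S ω ∈ Ω ∧ f (S ω) ≤ c} := by
    have : {ω | S ω ∈ Ω ∧ f (S ω) ≤ c} = S ⁻¹' (Ω ∩ f ⁻¹' Set.Iic c) := rfl
    rw [this]; exact hS (hΩ.inter (hf measurableSet_Iic))
  have hcompl : P {ω | S ω ∈ Ω ∧ f (S ω) ≤ c}ᶜ ≤ P {ω | S ω ∉ Ω} + P {ω | c ≤ f (S ω)} :=
    le_trans (measure_mono hsub) (measure_union_le _ _)
  have hcomplR : (P {ω | S ω ∈ Ω ∧ f (S ω) ≤ c}ᶜ).toReal ≤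
      (P {ω | S ω ∉ Ω}).toReal + (P {ω | c ≤ f (S ω)}).toReal := by
    rw [← ENNReal.toReal_add (measure_ne_top _ _) (measure_ne_top _ _)]
    exact ENNReal.toReal_mono (ENNReal.add_ne_top.2 ⟨measure_ne_top _ _, measure_ne_top _ _⟩) hcompl
  have hsum : (P {ω | S ω ∈ Ω ∧ f (S ω) ≤ c}).toReal
      + (P {ω | S ω ∈ Ω ∧ f (S ω) ≤ c}ᶜ).toReal = 1 := by
    rw [← ENNReal.toReal_add (measure_ne_top _ _) (measure_ne_top _ _),
      measure_add_measure_compl hmeas, measure_univ, ENNReal.toReal_one]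
  linarith
end

section
/- Let (Ω', 𝒜, P) be a probability space, B > 0, K > 0, and let L : Ω' → ℝ be a random variable with 0 ≤ L ≤ B almost surely, and Δ : Ω' → ℝ with 0 ≤ Δ ≤ K·L almost surely. Let α, β ∈ (0,1) and γ > 0, and let L₁, …, Lₙ be n i.i.d. copies of L. If n ≥ 2·K²·B²·log(1/β)/(α²·γ²), then with probability at least 1 − β over the samples, the following implication holds: if the empirical mean (1/n)∑_{i=1}^n Lᵢ ≤ α·γ/(2K), then P(Δ > γ) ≤ α. -/
open MeasureTheory ProbabilityTheory

/-!
If `P(Δ > γ) > α`, Markov's inequality and `Δ ≤ K·L` give `E[L] > αγ/K`, twice the threshold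
`t = αγ/(2K)`. The empirical mean can then fall below `t` only by deviating from its expectation
by at least `t`, which by Hoeffding's inequality for the `[0, B]`-valued samples has probability
at most `exp(-2nt²/B²) ≤ β` under the sample-size condition.
-/

lemma measureReal_sum_le_sum_integral_sub_le_exp {Ω ι : Type*} [MeasurableSpace Ω]
    {μ : Measure Ω} [Fintype ι] {X : ι → Ω → ℝ} (hindep : iIndepFun X μ)
    (hX : ∀ i, AEMeasurable (X i) μ) {a b : ℝ} (hab : ∀ i, ∀ᵐ ω ∂μ, X i ω ∈ Set.Icc a b)
    {ε : ℝ} (hε : 0 ≤ ε) :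
    μ.real {ω | ∑ i, X i ω ≤ ∑ i, μ[X i] - ε} ≤
      Real.exp (-2 * ε ^ 2 / (Fintype.card ι * (b - a) ^ 2)) := by
  have := hindep.isProbabilityMeasure
  have hsubG : ∀ i ∈ Finset.univ,
      HasSubgaussianMGF (fun ω ↦ μ[X i] - X i ω) ((‖b - a‖₊ / 2) ^ 2) μ := fun i _ ↦
    (hasSubgaussianMGF_of_mem_Icc (hX i) (hab i)).neg.congr (ae_of_all _ fun ω ↦ by simp)
  have hindep' : iIndepFun (fun i ω ↦ μ[X i] - X i ω) μ :=
    hindep.comp _ fun i ↦ (measurable_const.sub measurable_id : Measurable fun x ↦ μ[X i] - x)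
  convert HasSubgaussianMGF.measure_sum_ge_le_of_iIndepFun hindep' hsubG hε using 2
  · ext ω
    simp only [Set.mem_ofPred_eq, Finset.sum_sub_distrib]
    constructor <;> intro h <;> linarith
  · rw [Finset.sum_const, Finset.card_univ, nsmul_eq_mul]
    push_cast
    rw [Real.norm_eq_abs, div_pow, sq_abs]
    generalize (b - a) ^ 2 = w
    ring

lemma mul_measureReal_lt_le_mul_integral_of_ae_le_mul {Ω : Type*} [MeasurableSpace Ω]
    {P : Measure Ω} [IsFiniteMeasure P] {L Δ : Ω → ℝ} {K γ : ℝ} (hL : Integrable L P)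
    (hΔ : AEStronglyMeasurable Δ P) (hΔ0 : ∀ᵐ ω ∂P, 0 ≤ Δ ω)
    (hΔL : ∀ᵐ ω ∂P, Δ ω ≤ K * L ω) (hγ : 0 ≤ γ) :
    γ * P.real {ω | γ < Δ ω} ≤ K * ∫ ω, L ω ∂P := by
  have hΔint : Integrable Δ P := by
    refine (hL.const_mul K).mono' hΔ ?_
    filter_upwards [hΔ0, hΔL] with ω h0 hle
    rwa [Real.norm_of_nonneg h0]
  calc γ * P.real {ω | γ < Δ ω}
      ≤ γ * P.real {ω | γ ≤ Δ ω} :=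
        mul_le_mul_of_nonneg_left (measureReal_mono fun ω (h : γ < Δ ω) ↦ h.le) hγ
    _ ≤ ∫ ω, Δ ω ∂P := mul_meas_ge_le_integral_of_nonneg hΔ0 hΔint γ
    _ ≤ ∫ ω, K * L ω ∂P := integral_mono_ae hΔint (hL.const_mul K) hΔL
    _ = K * ∫ ω, L ω ∂P := integral_const_mul K _

lemma exp_neg_two_mul_sq_div_le_of_sample_size {n B K α β γ : ℝ} (hn0 : 0 < n) (hB : 0 < B)
    (hK : 0 < K) (hα : 0 < α) (hβ : 0 < β) (hγ : 0 < γ)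
    (hn : n ≥ 2 * K ^ 2 * B ^ 2 * Real.log (1 / β) / (α ^ 2 * γ ^ 2)) :
    Real.exp (-2 * (n * (α * γ / (2 * K))) ^ 2 / (n * B ^ 2)) ≤ β := by
  rw [← Real.le_log_iff_exp_le hβ, div_le_iff₀ (by positivity)]
  rw [ge_iff_le, div_le_iff₀ (by positivity), one_div, Real.log_inv] at hn
  have key := mul_le_mul_of_nonneg_left hn hn0.le
  rw [show -2 * (n * (α * γ / (2 * K))) ^ 2 = -(n * (n * (α ^ 2 * γ ^ 2))) / (2 * K ^ 2) by
    field_simp, div_le_iff₀ (by positivity)]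
  linarith

/-- Generalization certificate: if `0 ≤ L ≤ B` and `0 ≤ Δ ≤ K·L` almost surely,
and `L₁, …, Lₙ` are i.i.d. copies of `L` with
`n ≥ 2K²B²log(1/β)/(α²γ²)`, then with probability at least `1 - β` over the
samples, the implication "empirical mean `≤ αγ/(2K)` implies `P(Δ > γ) ≤ α`"
holds. -/
theorem empirical_loss_generalization_certificate
    (Ω' : Type*) [MeasurableSpace Ω'] (P : Measure Ω') [IsProbabilityMeasure P]
    (L Δ : Ω' → ℝ) (hLmeas : Measurable L) (hΔmeas : Measurable Δ)
    (B K : ℝ) (hB : 0 < B) (hK : 0 < K)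
    (hL0 : ∀ᵐ ω ∂P, 0 ≤ L ω) (hLB : ∀ᵐ ω ∂P, L ω ≤ B)
    (hΔ0 : ∀ᵐ ω ∂P, 0 ≤ Δ ω) (hΔL : ∀ᵐ ω ∂P, Δ ω ≤ K * L ω)
    (α β γ : ℝ) (hα : α ∈ Set.Ioo (0 : ℝ) 1) (hβ : β ∈ Set.Ioo (0 : ℝ) 1)
    (hγ : 0 < γ)
    (Ω'' : Type*) [MeasurableSpace Ω''] (ν : Measure Ω'') [IsProbabilityMeasure ν]
    (n : ℕ) (Ls : Fin n → Ω'' → ℝ) (hLsmeas : ∀ i, Measurable (Ls i))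
    (hiid : iIndepFun Ls ν)
    (hdist : ∀ i, ν.map (Ls i) = P.map L)
    (hn : (n : ℝ) ≥ 2 * K ^ 2 * B ^ 2 * Real.log (1 / β) / (α ^ 2 * γ ^ 2)) :
    (ν {ω | (1 / (n : ℝ)) * ∑ i, Ls i ω ≤ α * γ / (2 * K) →
        (P {ω' | Δ ω' > γ}).toReal ≤ α}).toReal ≥ 1 - β := by
  obtain ⟨hα0, -⟩ := hα
  obtain ⟨hβ0, hβ1⟩ := hβ
  by_cases hPΔ : P.real {ω' | γ < Δ ω'} ≤ α
  · simp only [measureReal_def] at hPΔ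
    simp only [gt_iff_lt, hPΔ, imp_true_iff, Set.ofPred_true, measure_univ, ENNReal.toReal_one]
    linarith
  set t := α * γ / (2 * K) with ht
  have hLIcc : ∀ᵐ ω ∂P, L ω ∈ Set.Icc 0 B := hL0.and hLB
  have hident : ∀ i, IdentDistrib L (Ls i) P ν := fun i ↦
    ⟨hLmeas.aemeasurable, (hLsmeas i).aemeasurable, (hdist i).symm⟩
  have hmean : 2 * t ≤ ∫ ω, L ω ∂P := by
    have hmarkov := mul_measureReal_lt_le_mul_integral_of_ae_le_mul
      (Integrable.of_mem_Icc 0 B hLmeas.aemeasurable hLIcc) hΔmeas.aestronglyMeasurable hΔ0 hΔL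
      hγ.le
    have hαγ := mul_lt_mul_of_pos_left (not_le.mp hPΔ) hγ
    rw [ht, mul_div_assoc', div_le_iff₀ (by positivity)]
    linarith
  have hn0 : (0 : ℝ) < n :=
    lt_of_lt_of_le (by have := Real.log_pos (one_lt_one_div hβ0 hβ1); positivity) hn
  have htail : ν.real {ω | ∑ i, Ls i ω ≤ n * t} ≤ β := by
    refine (measureReal_mono fun ω hω ↦ ?_).trans
      ((measureReal_sum_le_sum_integral_sub_le_exp hiid (fun i ↦ (hLsmeas i).aemeasurable)
        (fun i ↦ (hident i).ae_mem_snd measurableSet_Icc hLIcc) (by positivity : 0 ≤ n * t)).trans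
      ?_)
    · simp only [Set.mem_ofPred_eq, ← (hident _).integral_eq, Finset.sum_const, Finset.card_univ,
        Fintype.card_fin, nsmul_eq_mul] at hω ⊢
      linarith [mul_le_mul_of_nonneg_left hmean hn0.le]
    · simpa using exp_neg_two_mul_sq_div_le_of_sample_size hn0 hB hK hα0 hβ0 hγ hn
  have hmeas : MeasurableSet {ω | ∑ i, Ls i ω ≤ n * t} :=
    measurableSet_le (by fun_prop) measurable_const
  calc (ν {ω | (1 / (n : ℝ)) * ∑ i, Ls i ω ≤ t → P.real {ω' | γ < Δ ω'} ≤ α}).toReal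
      ≥ ν.real {ω | ∑ i, Ls i ω ≤ n * t}ᶜ := measureReal_mono fun ω hω hle ↦ absurd
        (by rwa [one_div, inv_mul_le_iff₀ hn0] at hle) hω
    _ = 1 - ν.real {ω | ∑ i, Ls i ω ≤ n * t} := probReal_compl_eq_one_sub hmeas
    _ ≥ 1 - β := by linarith
end
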